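/- arXiv:2402.08131 — 2 statements merged into one kernel-verified Lean document; each statement's English description precedes it below -/
import Mathlib

section
/- Let G be a finite group and K = x^G such that K^n is a conjugacy class for some n ≥ 2. Then |K^r| = |K| for all r ∈ ℕ, K^{o(x)+1} = K, and K^{o(x)−1} = K⁻¹, where o(x) is the order of x. -/
open Pointwise

/-- The conjugacy class of `a` in `G`. -/
def conjClass (G : Type*) [Group G] (a : G) : Set G := {b | IsConj a b}

section Aux

variable {G : Type*} [Group G]

lemma mem_conjClass {a b : G} : b ∈ conjClass G a ↔ IsConj a b := Iff.rfl

lemma self_mem_conjClass (a : G) : a ∈ conjClass G a := IsConj.refl a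

lemma conj_mem_conjClass {a : G} (g : G) {k : G} (hk : k ∈ conjClass G a) :
    g * k * g⁻¹ ∈ conjClass G a :=
  hk.trans (isConj_iff.2 ⟨g, rfl⟩)

lemma conjClass_eq_of_isConj {a b : G} (h : IsConj a b) :
    conjClass G a = conjClass G b := by
  ext c
  exact ⟨fun hc => h.symm.trans hc, fun hc => h.trans hc⟩

lemma conjClass_pow_image (a : G) (n : ℕ) :
    conjClass G (a ^ n) = (fun k => k ^ n) '' conjClass G a := by
  ext y
  constructor
  · rintro hy
    obtain ⟨g, rfl⟩ := isConj_iff.1 hy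
    exact ⟨g * a * g⁻¹, isConj_iff.2 ⟨g, rfl⟩, conj_pow⟩
  · rintro ⟨k, hk, rfl⟩
    obtain ⟨g, rfl⟩ := isConj_iff.1 hk
    show (g * a * g⁻¹) ^ n ∈ conjClass G (a ^ n)
    rw [conj_pow]
    exact isConj_iff.2 ⟨g, rfl⟩

lemma conjClass_one : conjClass G (1 : G) = {1} := by
  ext b
  simp only [mem_conjClass, Set.mem_singleton_iff]
  constructor
  · intro hb
    obtain ⟨g, rfl⟩ := isConj_iff.1 hb
    simp
  · rintro rfl; exact IsConj.refl 1

end Aux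

theorem stmt11 {G : Type*} [Group G] [Fintype G] (x : G) (n : ℕ) (hn : 2 ≤ n)
    (h : ∃ d : G, (conjClass G x) ^ n = conjClass G d) :
    (∀ r : ℕ, 1 ≤ r → Nat.card ((conjClass G x) ^ r : Set G) = Nat.card (conjClass G x)) ∧
    (conjClass G x) ^ (orderOf x + 1) = conjClass G x ∧
    (conjClass G x) ^ (orderOf x - 1) = (conjClass G x)⁻¹ := by
  classical
  set K : Set G := conjClass G x with hK
  obtain ⟨d, hd⟩ := h
  have hxK : x ∈ K := self_mem_conjClass x
  -- x^j ∈ K^j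
  have hxpow : ∀ j : ℕ, x ^ j ∈ K ^ j := fun j => Set.pow_mem_pow hxK
  -- K^n = conjClass (x^n)
  have hxn : x ^ n ∈ conjClass G d := by rw [← hd]; exact hxpow n
  have hKn : K ^ n = conjClass G (x ^ n) := by
    rw [hd, conjClass_eq_of_isConj hxn]
  -- cardinality bound  : (conjClass (x^n)).ncard ≤ K.ncard
  have hcard_le : (conjClass G (x ^ n)).ncard ≤ K.ncard := by
    rw [conjClass_pow_image]
    exact Set.ncard_image_le K.toFinite
  -- x^(n-1) • K ⊆ K^n
  have hsub : x ^ (n - 1) • K ⊆ K ^ n := by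
    rintro a ⟨k, hk, rfl⟩
    show x ^ (n - 1) * k ∈ K ^ n
    have h2 : x ^ (n - 1) * k ∈ K ^ (n - 1) * K := Set.mul_mem_mul (hxpow _) hk
    rwa [← pow_succ, Nat.sub_add_cancel (by omega)] at h2
  -- hence equality by cardinality
  have hKneq : K ^ n = x ^ (n - 1) • K := by
    refine (Set.eq_of_subset_of_ncard_le hsub ?_ (Set.toFinite _)).symm
    rw [Set.ncard_smul_set, hKn]
    exact hcard_le
  -- K * K = x • K
  have hK2 : K * K = x • K := by
    apply Set.Subset.antisymm
    · rintro a ⟨k1, hk1, k2, hk2, rfl⟩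
      have hmem : k1 * k2 * x ^ (n - 2) ∈ K ^ n := by
        have h1 : k1 * k2 ∈ K ^ 2 := by
          rw [sq]; exact Set.mul_mem_mul hk1 hk2
        have h2 : (k1 * k2) * x ^ (n - 2) ∈ K ^ 2 * K ^ (n - 2) :=
          Set.mul_mem_mul h1 (hxpow (n - 2))
        rwa [← pow_add, Nat.add_sub_cancel' hn] at h2
      rw [hKneq] at hmem
      obtain ⟨k, hk, hkeq⟩ := hmem
      have hkeq' : x ^ (n - 1) * k = k1 * k2 * x ^ (n - 2) := hkeq
      refine ⟨x ^ (n - 2) * k * (x ^ (n - 2))⁻¹, conj_mem_conjClass _ hk, ?_⟩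
      show x * (x ^ (n - 2) * k * (x ^ (n - 2))⁻¹) = k1 * k2
      have hx : x * x ^ (n - 2) = x ^ (n - 1) := by
        rw [← pow_succ']; congr 1; omega
      have hstep : x * (x ^ (n - 2) * k * (x ^ (n - 2))⁻¹)
          = (x * x ^ (n - 2)) * k * (x ^ (n - 2))⁻¹ := by group
      rw [hstep, hx, hkeq']
      group
    · rintro a ⟨k, hk, rfl⟩
      exact Set.mul_mem_mul hxK hk
  -- K^r = x^(r-1) • K for r ≥ 1
  have hKr : ∀ r : ℕ, 1 ≤ r → K ^ r = x ^ (r - 1) • K := by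
    intro r hr
    induction r with
    | zero => omega
    | succ r ih =>
      rcases Nat.eq_or_lt_of_le hr with h1 | h1
      · simp [← h1]
      · have hr1 : 1 ≤ r := by omega
        have := ih hr1
        rw [pow_succ, this, smul_mul_assoc, hK2, smul_smul, ← pow_succ,
          Nat.succ_sub_one, Nat.sub_add_cancel hr1]
  have hcards : ∀ r : ℕ, 1 ≤ r → Nat.card (K ^ r : Set G) = Nat.card K := by
    intro r hr
    rw [Nat.card_coe_set_eq, Nat.card_coe_set_eq, hKr r hr, Set.ncard_smul_set]
  refine ⟨hcards, ?_, ?_⟩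
  · -- K^(orderOf x + 1) = K
    rw [hKr (orderOf x + 1) (by omega), Nat.add_sub_cancel, pow_orderOf_eq_one, one_smul]
  · -- K^(orderOf x - 1) = K⁻¹
    rcases Nat.lt_or_ge (orderOf x) 2 with hlt | hge
    · -- orderOf x = 1, so x = 1
      have hx1 : orderOf x = 1 := by
        have := orderOf_pos x; omega
      have : x = 1 := orderOf_eq_one_iff.1 hx1
      subst this
      rw [hx1]
      simp only [Nat.sub_self, pow_zero]
      rw [hK, conjClass_one]
      ext a; simp [Set.mem_inv]
    · -- orderOf x ≥ 2 : K⁻¹ ⊆ K^(orderOf x - 1) and cards agree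
      have hinv_sub : K⁻¹ ⊆ K ^ (orderOf x - 1) := by
        rintro a ha
        rw [Set.mem_inv] at ha
        have hmem : (a⁻¹) ^ (orderOf x - 1) ∈ K ^ (orderOf x - 1) :=
          Set.pow_mem_pow ha
        have : (a⁻¹) ^ (orderOf x - 1) = a := by
          have h1 : (a⁻¹) ^ orderOf x = 1 := by
            have ha' : IsConj x a⁻¹ := ha
            obtain ⟨g, hg⟩ := isConj_iff.1 ha'
            rw [← hg, conj_pow, pow_orderOf_eq_one]
            group
          have h2 : (a⁻¹) ^ (orderOf x - 1) * a⁻¹ = 1 := by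
            rw [← pow_succ, Nat.sub_add_cancel (by omega)]; exact h1
          have := congrArg (· * a) h2
          simpa [mul_assoc] using this
        rwa [this] at hmem
      refine (Set.eq_of_subset_of_ncard_le hinv_sub ?_ (Set.toFinite _)).symm
      rw [Set.ncard_inv, hKr (orderOf x - 1) (by omega), Set.ncard_smul_set]
end

section
/- Let G be a finite group and K = x^G with K^n = D ∪ D⁻¹ for some n ≥ 2 and conjugacy class D. Then χ(x)^n + χ(x⁻¹)^n = χ(1)^{n−1}(χ(x^n) + χ(x^{−n})) for all irreducible characters χ of G. -/
open Pointwise CategoryTheory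

/-!
Let `C ∈ ℂ[G]` be the class sum of `K = x^G` and `S` the antipode, the linear extension of
`g ↦ g⁻¹`, so that `S C` is the class sum of `x⁻¹`. By Schur's lemma `C` and `S C` act on an
irreducible `V` by the scalars `|K| χ(x) / χ(1)` and `|K| χ(x⁻¹) / χ(1)`, whence
`|K|ⁿ (χ(x)ⁿ + χ(x⁻¹)ⁿ) = χ(1)ⁿ⁻¹ (χ(Cⁿ) + χ(S Cⁿ))`. Now `Cⁿ` is supported on `Kⁿ = D ∪ D⁻¹`,
where `g ↦ χ(g) + χ(g⁻¹)` is constant, equal to its value at `xⁿ`; as the coefficients of `Cⁿ`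
add up to `|K|ⁿ`, this gives `χ(Cⁿ) + χ(S Cⁿ) = |K|ⁿ (χ(xⁿ) + χ(x⁻ⁿ))`.
-/

open MonoidAlgebra HopfAlgebra Bialgebra Coalgebra

theorem IsConj.inv {G : Type*} [Group G] {a b : G} (h : IsConj a b) : IsConj a⁻¹ b⁻¹ :=
  let ⟨c, hc⟩ := h; ⟨c, hc.inv_right⟩

theorem isConj_inv_inv {G : Type*} [Group G] {a b : G} : IsConj a⁻¹ b⁻¹ ↔ IsConj a b :=
  ⟨fun h => by simpa using h.inv, IsConj.inv⟩

theorem mem_toFinset_conjugatesOf {G : Type*} [Group G] [Fintype G] [DecidableEq G] {x g : G} :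
    g ∈ (conjugatesOf x).toFinset ↔ IsConj x g := by
  rw [Set.mem_toFinset]
  rfl

theorem HopfAlgebra.antipode_pow {R A : Type*} [CommSemiring R] [Semiring A] [HopfAlgebra R A]
    (a : A) (n : ℕ) : antipode R (a ^ n) = antipode R a ^ n :=
  MulOpposite.op_injective <| by simpa using map_pow (antipodeAlgHomOp R A) a n

namespace MonoidAlgebra

variable {k G : Type*} [CommSemiring k]

theorem support_coeff_pow_subset [Monoid G] [DecidableEq G] (f : k[G]) (n : ℕ) :
    (f ^ n).coeff.support ⊆ f.coeff.support ^ n := by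
  induction n with
  | zero => exact Finsupp.support_single_subset
  | succ n ih =>
    rw [pow_succ, pow_succ]
    exact (support_coeff_mul_subset _ _).trans (Finset.mul_subset_mul ih subset_rfl)

theorem linearMap_eq_counit_mul {L : k[G] →ₗ[k] k} {c : k} {f : k[G]}
    (hf : ∀ g ∈ f.coeff.support, L (single g 1) = c) : L f = counit f * c := by
  conv_lhs => rw [← sum_coeff_single f]
  conv_rhs => rw [← sum_coeff_single f]
  rw [map_finsuppSum, map_finsuppSum, Finsupp.sum_mul]
  refine Finsupp.sum_congr fun g hg => ?_
  rw [← mul_one (f.coeff g), ← smul_single', map_smul, map_smul, hf g hg, counit_single]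
  simp

end MonoidAlgebra

section ConjClassSum

variable (k : Type*) {G : Type*} [CommSemiring k] [Group G] [Fintype G] [DecidableEq G]

noncomputable def conjClassSum (x : G) : k[G] := ∑ g ∈ (conjugatesOf x).toFinset, single g 1

variable {k}

theorem commute_single_conjClassSum (x g : G) : Commute (single g 1) (conjClassSum k x) := by
  simp only [Commute, SemiconjBy, conjClassSum, Finset.mul_sum, Finset.sum_mul, single_mul_single,
    one_mul]
  refine Finset.sum_equiv (MulAut.conj g).toEquiv (fun h => ?_) (fun h _ => ?_)
  · simp only [mem_toFinset_conjugatesOf, MulEquiv.toEquiv_eq_coe, MulEquiv.coe_toEquiv,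
      MulAut.conj_apply]
    exact ⟨fun hh => hh.trans (isConj_iff.2 ⟨g, rfl⟩),
      fun hh => hh.trans (isConj_iff.2 ⟨g⁻¹, by group⟩)⟩
  · simp

theorem antipode_conjClassSum (x : G) : antipode k (conjClassSum k x) = conjClassSum k x⁻¹ := by
  simp only [conjClassSum, map_sum, antipode_single]
  refine Finset.sum_equiv (Equiv.inv G) (fun h => ?_) (fun h _ => rfl)
  rw [mem_toFinset_conjugatesOf, mem_toFinset_conjugatesOf, Equiv.inv_apply, isConj_inv_inv]

theorem counit_conjClassSum (x : G) :
    counit (R := k) (conjClassSum k x) = (conjugatesOf x).toFinset.card := by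
  simp [conjClassSum]

theorem counit_conjClassSum_ne_zero [CharZero k] (x : G) :
    counit (R := k) (conjClassSum k x) ≠ 0 := by
  rw [counit_conjClassSum]
  exact_mod_cast (Finset.card_pos.2 ⟨x, mem_toFinset_conjugatesOf.2 (IsConj.refl x)⟩).ne'

theorem support_conjClassSum (x : G) :
    ((conjClassSum k x).coeff.support : Set G) ⊆ conjugatesOf x := by
  intro g hg
  rw [conjClassSum, coeff_sum] at hg
  obtain ⟨h, hh, hg⟩ := Finset.mem_biUnion.1 (Finsupp.support_finsetSum hg)
  rw [Finset.mem_singleton.1 (Finsupp.support_single_subset hg)]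
  exact mem_toFinset_conjugatesOf.1 hh

theorem support_conjClassSum_pow (x : G) (n : ℕ) :
    ((conjClassSum k x ^ n).coeff.support : Set G) ⊆ conjugatesOf x ^ n := by
  refine (Finset.coe_subset.2 (support_coeff_pow_subset _ n)).trans ?_
  rw [Finset.coe_pow]
  exact Set.pow_subset_pow_left (support_conjClassSum x)

end ConjClassSum

namespace FDRep

variable {k G : Type*} [Field k]

section Monoid

variable [Monoid G] (V : FDRep k G)

noncomputable def algCharacter : k[G] →ₗ[k] k :=
  LinearMap.trace k V ∘ₗ (Representation.asAlgebraHom V.ρ).toLinearMap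

theorem algCharacter_single (g : G) (b : k) :
    V.algCharacter (single g b) = b * V.character g := by
  simp [algCharacter, Representation.asAlgebraHom_single, character]

theorem exists_eq_smul_one_of_commute [IsAlgClosed k] [Simple V] (T : Module.End k V)
    (hT : ∀ g, Commute (V.ρ g) T) : ∃ c : k, T = c • 1 := by
  let φ : V ⟶ V := ⟨InducedCategory.homMk (ModuleCat.ofHom T), fun g => by
    ext v; exact LinearMap.congr_fun (hT g).symm v⟩
  obtain ⟨c, hc⟩ := endomorphism_simple_eq_smul_id k φ
  exact ⟨c, LinearMap.ext fun v => (congrArg (fun f : V ⟶ V => f.hom.hom.hom v) hc).symm⟩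

theorem algCharacter_pow_succ [IsAlgClosed k] [Simple V] {f : k[G]}
    (hf : ∀ g, Commute (single g 1) f) (n : ℕ) :
    V.algCharacter f ^ (n + 1) = V.character 1 ^ n * V.algCharacter (f ^ (n + 1)) := by
  obtain ⟨c, hc⟩ := V.exists_eq_smul_one_of_commute (Representation.asAlgebraHom V.ρ f) fun g => by
    simpa using (hf g).map (Representation.asAlgebraHom V.ρ)
  simp only [algCharacter, LinearMap.comp_apply, AlgHom.toLinearMap_apply, map_pow, hc, smul_pow,
    one_pow, map_smul, LinearMap.trace_one, character, map_one]
  ring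

end Monoid

section Group

variable [Group G] (V : FDRep k G)

theorem char_eq_of_isConj {g h : G} (hgh : IsConj g h) : V.character g = V.character h := by
  obtain ⟨c, rfl⟩ := isConj_iff.1 hgh
  exact (V.char_conj g c).symm

theorem char_add_char_inv_eq_of_mem {d g : G} (hg : g ∈ conjugatesOf d ∪ (conjugatesOf d)⁻¹) :
    V.character g + V.character g⁻¹ = V.character d + V.character d⁻¹ := by
  rcases hg with hg | hg
  · rw [V.char_eq_of_isConj hg, V.char_eq_of_isConj hg.inv]
  · have hg' : IsConj d g⁻¹ := hg
    rw [← V.char_eq_of_isConj hg', ← inv_inv g, V.char_eq_of_isConj hg'.inv, inv_inv, add_comm]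

theorem algCharacter_add_algCharacter_antipode {f : k[G]} {c : k}
    (hf : ∀ g ∈ f.coeff.support, V.character g + V.character g⁻¹ = c) :
    V.algCharacter f + V.algCharacter (antipode k f) = counit f * c :=
  linearMap_eq_counit_mul (L := V.algCharacter + V.algCharacter ∘ₗ antipode k) fun g hg => by
    simpa [algCharacter_single] using hf g hg

theorem algCharacter_conjClassSum [Fintype G] [DecidableEq G] (x : G) :
    V.algCharacter (conjClassSum k x) = counit (conjClassSum k x) * V.character x :=
  linearMap_eq_counit_mul fun g hg => by
    rw [algCharacter_single, one_mul, V.char_eq_of_isConj (support_conjClassSum x hg)]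

theorem counit_pow_mul_char_pow_add_char_inv_pow [IsAlgClosed k] [Simple V] [Fintype G]
    [DecidableEq G] (x : G) (n : ℕ) :
    counit (conjClassSum k x) ^ (n + 1) * (V.character x ^ (n + 1) + V.character x⁻¹ ^ (n + 1)) =
      V.character 1 ^ n * (V.algCharacter (conjClassSum k x ^ (n + 1)) +
        V.algCharacter (antipode k (conjClassSum k x ^ (n + 1)))) := by
  have hpow := V.algCharacter_pow_succ (commute_single_conjClassSum x) n
  have hpow_inv := V.algCharacter_pow_succ (commute_single_conjClassSum x⁻¹) n
  rw [← antipode_conjClassSum, ← antipode_pow] at hpow_inv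
  rw [mul_add (V.character 1 ^ n), ← hpow, ← hpow_inv, V.algCharacter_conjClassSum,
    antipode_conjClassSum, V.algCharacter_conjClassSum, ← antipode_conjClassSum, counit_antipode]
  ring

end Group

end FDRep

theorem stmt19 {G : Type} [Group G] [Fintype G] (x d : G) (n : ℕ) (hn : 2 ≤ n)
    (h : (conjClass G x) ^ n = conjClass G d ∪ (conjClass G d)⁻¹) :
    ∀ (V : FDRep ℂ G), Simple V →
      V.character x ^ n + V.character x⁻¹ ^ n =
        V.character 1 ^ (n - 1) * (V.character (x ^ n) + V.character (x ^ n)⁻¹) := by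
  intro V _
  classical
  change conjugatesOf x ^ n = conjugatesOf d ∪ (conjugatesOf d)⁻¹ at h
  obtain ⟨m, rfl⟩ : ∃ m, n = m + 1 := ⟨n - 1, by omega⟩
  have hxn : x ^ (m + 1) ∈ conjugatesOf d ∪ (conjugatesOf d)⁻¹ :=
    h ▸ Set.pow_mem_pow (mem_conjugatesOf_self (a := x))
  have hpair := V.algCharacter_add_algCharacter_antipode fun g hg =>
    (V.char_add_char_inv_eq_of_mem (h ▸ support_conjClassSum_pow x (m + 1) hg)).trans
      (V.char_add_char_inv_eq_of_mem hxn).symm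
  apply mul_left_cancel₀ (pow_ne_zero (m + 1) (counit_conjClassSum_ne_zero (k := ℂ) x))
  rw [V.counit_pow_mul_char_pow_add_char_inv_pow, hpair, counit_pow, Nat.add_sub_cancel]
  ring
end
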